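/- Let 0<α<1 and 0<λ≤λ⋆=(1−α)/√((1−α)²+α²). The function f₃(z) = z(1 − (αλ/(3−α))z³)^{−1/α} (principal branch), which corresponds to the Schwarz function ω(z)=z³ in the representation (z/f(z))^α = 1 − αλ z^α ∫₀^z ω(t)/t^{α+1} dt, belongs to U(α,λ) and its third logarithmic coefficient equals γ₃ = λ/(2(3−α)). In particular, the bound |γ₃| ≤ λ/(2(3−α)) of the main theorem is attained, hence sharp. -/

import Mathlib

open Complex Metric Set

/-- The class `U(α,λ)`: analytic functions on the unit disc of the form
`f(z) = z + a₂z² + ⋯` satisfying `|(z/f(z))^(1+α) f'(z) - 1| < λ` there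
(principal branch). -/
noncomputable def UClass (a l : ℝ) : Set (ℂ → ℂ) :=
  {f | AnalyticOnNhd ℂ f (ball 0 1) ∧ f 0 = 0 ∧ deriv f 0 = 1 ∧
    ∀ z ∈ ball (0:ℂ) 1, z ≠ 0 →
      ‖(z / f z) ^ ((1:ℂ) + (a:ℂ)) * deriv f z - 1‖ < l}

/-- `IsLogCoeff f γ` means the `γ n`, `n ≥ 1`, are the logarithmic coefficients
of `f`, i.e. `log (f z / z) = 2 ∑_{n≥1} γ n zⁿ` on the punctured unit disc. -/
def IsLogCoeff (f : ℂ → ℂ) (γ : ℕ → ℂ) : Prop :=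
  ∀ z ∈ ball (0:ℂ) 1, z ≠ 0 →
    HasSum (fun n : ℕ => 2 * γ (n + 1) * z ^ (n + 1)) (Complex.log (f z / z))
/-- `segInt a ω z = ∫₀^z ω(t)/t^(a+1) dt`, the integral taken along the segment
from `0` to `z` (parametrised by `t = s·z`, `s ∈ [0,1]`), with principal powers. -/
noncomputable def segInt (a : ℝ) (ω : ℂ → ℂ) (z : ℂ) : ℂ :=
  z * ∫ s in (0:ℝ)..1, ω ((s:ℂ) * z) / (((s:ℂ) * z) ^ ((a:ℂ) + 1))

/-! With `C = αλ/(3-α)` and `w = 1 - C z³` one has `z / f₃(z) = w^(1/α)`. Since `λ ≤ λ⋆ ≤ 1`,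
`C ≤ α/2`, so on the closed disc `|arg w| ≤ (3/2)|C z³| < πα` and the principal powers compose:
`(z/f₃)^α = w` and `(z/f₃)^(1+α) f₃' - 1 = λ z³`, of modulus `< λ`. The segment integral of
`t³/t^(α+1)` is `z^(3-α)/(3-α)`, which gives the representation. Finally
`log (f₃(z)/z) = -(1/α) log w = α⁻¹ ∑ Cⁿ z³ⁿ/n`, and comparing coefficients gives `2γ₃ = C/α`. -/

open scoped NNReal Real

theorem lambdaStar_le_one (a : ℝ) : (1 - a) / Real.sqrt ((1 - a) ^ 2 + a ^ 2) ≤ 1 :=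
  div_le_one_of_le₀ ((le_abs_self _).trans (Real.abs_le_sqrt (by nlinarith)))
    (Real.sqrt_nonneg _)

namespace Complex

theorem re_one_sub_pos {u : ℂ} (hu : ‖u‖ < 1) : 0 < (1 - u).re := by
  rw [sub_re, one_re]
  linarith [(le_abs_self u.re).trans (abs_re_le_norm u)]

theorem abs_arg_one_sub_le {u : ℂ} (hu : ‖u‖ ≤ 1 / 2) : |arg (1 - u)| ≤ 3 / 2 * ‖u‖ := by
  rw [← log_im, sub_eq_add_neg, ← norm_neg u]
  exact (abs_im_le_norm _).trans (norm_log_one_add_half_le_self (by rwa [norm_neg]))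

theorem cpow_inv_cpow_of_abs_arg_lt {w : ℂ} {r : ℝ} (hr : 0 < r) (hw : |arg w| < π * r) (t : ℂ) :
    (w ^ (r⁻¹ : ℂ)) ^ t = w ^ ((r⁻¹ : ℂ) * t) := by
  have him : (log w * (r⁻¹ : ℂ)).im = arg w / r := by
    rw [← ofReal_inv, mul_comm, im_ofReal_mul, log_im, inv_mul_eq_div]
  have hb : |arg w / r| < π := by
    rwa [abs_div, abs_of_pos hr, div_lt_iff₀ hr]
  rw [← him] at hb
  exact (cpow_mul t (abs_lt.1 hb).1 (abs_lt.1 hb).2.le).symm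

theorem log_cpow_ofReal {w : ℂ} {r : ℝ} (hw : w ≠ 0) (h : |r * arg w| < π) :
    log (w ^ (r : ℂ)) = r * log w := by
  have him : ((r : ℂ) * log w).im = r * arg w := by rw [im_ofReal_mul, log_im]
  rw [← him] at h
  rw [cpow_def_of_ne_zero hw, mul_comm, log_exp (abs_lt.1 h).1 (abs_lt.1 h).2.le]

theorem ofReal_mul_cpow {r : ℝ} (hr : 0 < r) {z : ℂ} (hz : z ≠ 0) (w : ℂ) :
    ((r : ℂ) * z) ^ w = (r : ℂ) ^ w * z ^ w := by
  have hr' : (r : ℂ) ≠ 0 := ofReal_ne_zero.2 hr.ne'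
  rw [cpow_def_of_ne_zero (mul_ne_zero hr' hz), log_ofReal_mul hr hz, ofReal_log hr.le,
    add_mul, exp_add, ← cpow_def_of_ne_zero hr', ← cpow_def_of_ne_zero hz]

-- As in `hasSum_taylorSeries_neg_log`, the `n = 0` term is the junk value `c ^ 0 / 0 = 0`.
theorem hasSum_neg_log_one_sub_mul_pow {k : ℕ} (hk : 0 < k) {c z : ℂ} (h : ‖c * z ^ k‖ < 1) :
    HasSum (fun n => (if k ∣ n then c ^ (n / k) / (n / k : ℕ) else 0) * z ^ n)
      (-log (1 - c * z ^ k)) := by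
  have hinj : Function.Injective (k * ·) := fun m n h => Nat.eq_of_mul_eq_mul_left hk h
  rw [← hinj.hasSum_iff]
  · convert hasSum_taylorSeries_neg_log h using 2 with n
    simp [Nat.mul_div_cancel_left n hk, mul_pow, pow_mul]
    ring
  · rintro n hn
    rw [if_neg (fun ⟨m, hm⟩ => hn ⟨m, hm.symm⟩), zero_mul]

end Complex

theorem hasFPowerSeriesOnBall_ofScalars_of_hasSum {c : ℕ → ℂ} {g : ℂ → ℂ} {r : ℝ} (hr : 0 < r)
    (hc : ∀ z : ℂ, ‖z‖ < r → HasSum (fun n => c n * z ^ n) (g z)) :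
    HasFPowerSeriesOnBall g (FormalMultilinearSeries.ofScalars ℂ c) 0 (ENNReal.ofReal r) where
  r_le := by
    refine le_of_forall_lt_imp_le_of_dense fun ρ hρ => ?_
    lift ρ to ℝ≥0 using (hρ.trans_le le_top).ne
    refine FormalMultilinearSeries.le_radius_of_summable _ ?_
    have hρr : (ρ : ℝ) < r := by simpa [ENNReal.coe_lt_ofReal] using hρ
    simpa [FormalMultilinearSeries.ofScalars_norm, norm_mul] using
      (hc ρ (by simpa using hρr)).summable.norm
  r_pos := ENNReal.ofReal_pos.2 hr
  hasSum {y} hy := by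
    simpa [FormalMultilinearSeries.ofScalars_apply_eq, mul_comm] using
      hc y (by simpa [Metric.eball_ofReal] using hy)

theorem eq_of_hasSum_pow_succ {c d : ℕ → ℂ} {g : ℂ → ℂ} {r : ℝ} (hr : 0 < r)
    (hc : ∀ z ∈ ball (0 : ℂ) r, z ≠ 0 → HasSum (fun n => c (n + 1) * z ^ (n + 1)) (g z))
    (hd : ∀ z ∈ ball (0 : ℂ) r, z ≠ 0 → HasSum (fun n => d (n + 1) * z ^ (n + 1)) (g z))
    (n : ℕ) : c (n + 1) = d (n + 1) := by
  set e := Function.update (c - d) 0 0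
  have he : ∀ z : ℂ, ‖z‖ < r → HasSum (fun n => e n * z ^ n) 0 := by
    intro z hz
    rcases eq_or_ne z 0 with rfl | hz0
    · convert hasSum_zero with n
      rcases n with _ | n <;> simp [e]
    · rw [← hasSum_nat_add_iff' 1]
      simpa [e, sub_mul] using
        (hc z (mem_ball_zero_iff.2 hz) hz0).sub (hd z (mem_ball_zero_iff.2 hz) hz0)
  have := (hasFPowerSeriesOnBall_ofScalars_of_hasSum hr he).hasFPowerSeriesAt.eq_zero
  simpa [e, sub_eq_zero] using
    congr_fun ((FormalMultilinearSeries.ofScalars_series_eq_zero ℂ).1 this) (n + 1)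

theorem cpow_mul_segInt_pow {a : ℝ} {k : ℕ} (hak : a < k) {z : ℂ} (hz : z ≠ 0) :
    z ^ (a : ℂ) * segInt a (fun t => t ^ k) z = z ^ k / (k - a) := by
  have hintegrand : ∀ s ∈ Set.uIoc (0 : ℝ) 1, ((s : ℂ) * z) ^ k / ((s : ℂ) * z) ^ ((a : ℂ) + 1)
      = (s : ℂ) ^ ((k : ℂ) - 1 - a) * z ^ ((k : ℂ) - 1 - a) := by
    intro s hs
    have hs0 : 0 < s := by simpa using hs.1
    rw [← cpow_natCast, ← cpow_sub _ _ (mul_ne_zero (ofReal_ne_zero.2 hs0.ne') hz),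
      ofReal_mul_cpow hs0 hz]
    ring_nf
  have hka : (k : ℂ) - a ≠ 0 := by exact_mod_cast (sub_pos.2 hak).ne'
  rw [segInt, intervalIntegral.integral_congr_ae (Filter.Eventually.of_forall hintegrand),
    intervalIntegral.integral_mul_const, integral_cpow (Or.inl (by simp; linarith))]
  rw [show (k : ℂ) - 1 - a + 1 = k - a by ring, ofReal_one, one_cpow, ofReal_zero,
    zero_cpow hka]
  field_simp
  conv_rhs => rw [← cpow_natCast, show (k : ℂ) = a + 1 + (k - 1 - a) by ring, cpow_add _ _ hz,
    cpow_add _ _ hz, cpow_one]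
  ring

-- The paper's `f₃` is `extremal α (αλ / (3 - α))`.
noncomputable def extremal (a C : ℝ) (z : ℂ) : ℂ :=
  z * (1 - (C : ℂ) * z ^ 3) ^ (-(1 : ℂ) / a)

section Extremal

variable {a C : ℝ} {z : ℂ}

theorem div_extremal_eq (hz : z ≠ 0) : z / extremal a C z = (1 - (C : ℂ) * z ^ 3) ^ (a⁻¹ : ℂ) := by
  rw [extremal, neg_div, one_div, cpow_neg, div_mul_eq_div_div, div_self hz, one_div, inv_inv]

theorem hasDerivAt_extremal (hre : 0 < (1 - (C : ℂ) * z ^ 3).re) :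
    HasDerivAt (extremal a C)
      ((1 - (C : ℂ) * z ^ 3) ^ (-(1 : ℂ) / a - 1) * (1 - C * z ^ 3 + 3 * C * z ^ 3 / a)) z := by
  have hw : 1 - (C : ℂ) * z ^ 3 ≠ 0 := fun h => by simp [h] at hre
  have hw' : HasDerivAt (fun z : ℂ => 1 - (C : ℂ) * z ^ 3) (-(C * (3 * z ^ 2))) z := by
    simpa using ((hasDerivAt_pow 3 z).const_mul (C : ℂ)).const_sub 1
  refine ((hasDerivAt_id z).mul (hw'.cpow_const (c := -(1 : ℂ) / a) (Or.inl hre))).congr_deriv ?_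
  rw [cpow_sub _ _ hw, cpow_one, id, one_mul]
  field_simp

theorem div_extremal_cpow_mul_deriv_sub_one (ha : 0 < a) (hz : z ≠ 0)
    (hre : 0 < (1 - (C : ℂ) * z ^ 3).re) (harg : |arg (1 - (C : ℂ) * z ^ 3)| < π * a) :
    (z / extremal a C z) ^ ((1 : ℂ) + a) * deriv (extremal a C) z - 1 =
      ((C * (3 - a) / a : ℝ) : ℂ) * z ^ 3 := by
  have hw : 1 - (C : ℂ) * z ^ 3 ≠ 0 := fun h => by simp [h] at hre
  have ha' : (a : ℂ) ≠ 0 := ofReal_ne_zero.2 ha.ne'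
  rw [div_extremal_eq hz, cpow_inv_cpow_of_abs_arg_lt ha harg, (hasDerivAt_extremal hre).deriv,
    ← mul_assoc, ← cpow_add _ _ hw,
    show (a⁻¹ : ℂ) * (1 + a) + (-1 / a - 1) = 0 by field_simp; ring, cpow_zero]
  push_cast
  field_simp
  ring

theorem div_extremal_cpow (ha : 0 < a) (hz : z ≠ 0) (harg : |arg (1 - (C : ℂ) * z ^ 3)| < π * a) :
    (z / extremal a C z) ^ (a : ℂ) = 1 - C * z ^ 3 := by
  rw [div_extremal_eq hz, cpow_inv_cpow_of_abs_arg_lt ha harg,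
    inv_mul_cancel₀ (ofReal_ne_zero.2 ha.ne'), cpow_one]

theorem log_extremal_div (ha : 0 < a) (hz : z ≠ 0) (hw : 1 - (C : ℂ) * z ^ 3 ≠ 0)
    (harg : |arg (1 - (C : ℂ) * z ^ 3)| < π * a) :
    log (extremal a C z / z) = a⁻¹ * -log (1 - C * z ^ 3) := by
  have hexp : -(1 : ℂ) / a = ((-a⁻¹ : ℝ) : ℂ) := by push_cast; ring
  have hlt : |-a⁻¹ * arg (1 - (C : ℂ) * z ^ 3)| < π := by
    rw [abs_mul, abs_neg, abs_inv, abs_of_pos ha, inv_mul_lt_iff₀ ha]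
    linarith
  rw [extremal, mul_div_cancel_left₀ _ hz, hexp, log_cpow_ofReal hw hlt]
  push_cast
  ring

theorem norm_ofReal_mul_pow_three_le (hC : 0 ≤ C) (hz : ‖z‖ ≤ 1) : ‖(C : ℂ) * z ^ 3‖ ≤ C := by
  rw [norm_mul, norm_real, Real.norm_of_nonneg hC, norm_pow]
  exact mul_le_of_le_one_right hC (pow_le_one₀ (norm_nonneg z) hz)

theorem abs_arg_one_sub_mul_pow_three_lt (ha : 0 < a) (ha1 : a ≤ 1) (hC : 0 ≤ C)
    (hCa : C ≤ a / 2) (hz : ‖z‖ ≤ 1) :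
    |arg (1 - (C : ℂ) * z ^ 3)| < π * a := by
  have hu := norm_ofReal_mul_pow_three_le hC hz
  calc |arg (1 - (C : ℂ) * z ^ 3)| ≤ 3 / 2 * ‖(C : ℂ) * z ^ 3‖ :=
        abs_arg_one_sub_le (by linarith)
    _ ≤ 3 / 2 * (a / 2) := by linarith
    _ < π * a := by nlinarith [Real.pi_gt_three]

theorem extremal_mem_UClass {l : ℝ} (ha : 0 < a) (ha1 : a ≤ 1) (hC : 0 ≤ C) (hCa : C ≤ a / 2)
    (hl : 0 < l) (hCl : C * (3 - a) / a ≤ l) : extremal a C ∈ UClass a l := by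
  have hre : ∀ z : ℂ, ‖z‖ ≤ 1 → 0 < (1 - (C : ℂ) * z ^ 3).re := fun z hz =>
    re_one_sub_pos ((norm_ofReal_mul_pow_three_le hC hz).trans_lt (by linarith))
  refine ⟨fun z hz => ?_, by simp [extremal], ?_, fun z hz hz0 => ?_⟩
  · have hz1 := (mem_ball_zero_iff.1 hz).le
    exact analyticAt_id.mul
      ((analyticAt_const.sub (analyticAt_const.mul (analyticAt_id.pow 3))).cpow
        analyticAt_const (Or.inl (hre z hz1)))
  · simpa using (hasDerivAt_extremal (a := a) (hre 0 (by simp))).deriv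
  · have hz1 := mem_ball_zero_iff.1 hz
    rw [div_extremal_cpow_mul_deriv_sub_one ha hz0 (hre z hz1.le)
      (abs_arg_one_sub_mul_pow_three_lt ha ha1 hC hCa hz1.le), norm_mul,
      norm_pow, norm_real, Real.norm_of_nonneg (div_nonneg (mul_nonneg hC (by linarith)) ha.le)]
    calc C * (3 - a) / a * ‖z‖ ^ 3 ≤ l * ‖z‖ ^ 3 := by gcongr
      _ < l := mul_lt_of_lt_one_right hl (pow_lt_one₀ (norm_nonneg z) hz1 (by norm_num))

theorem extremal_logCoeff_three {γ : ℕ → ℂ} (ha : 0 < a) (ha1 : a ≤ 1) (hC : 0 ≤ C)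
    (hCa : C ≤ a / 2) (hγ : IsLogCoeff (extremal a C) γ) : γ 3 = ((C / (2 * a) : ℝ) : ℂ) := by
  set d : ℕ → ℂ := fun n => (a⁻¹ : ℂ) * if 3 ∣ n then (C : ℂ) ^ (n / 3) / (n / 3 : ℕ) else 0
  have hd : ∀ z ∈ ball (0 : ℂ) 1, z ≠ 0 →
      HasSum (fun n => d (n + 1) * z ^ (n + 1)) (log (extremal a C z / z)) := by
    intro z hz hz0
    have hz1 := (mem_ball_zero_iff.1 hz).le
    have hu := (norm_ofReal_mul_pow_three_le hC hz1).trans_lt (by linarith : C < 1)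
    have hfull : HasSum (fun n => d n * z ^ n) (log (extremal a C z / z)) := by
      have hw : 1 - (C : ℂ) * z ^ 3 ≠ 0 :=
        sub_ne_zero.2 fun h => by rw [← h, norm_one] at hu; exact lt_irrefl 1 hu
      rw [log_extremal_div ha hz0 hw (abs_arg_one_sub_mul_pow_three_lt ha ha1 hC hCa hz1)]
      simpa [d, mul_assoc] using
        (hasSum_neg_log_one_sub_mul_pow three_pos hu).mul_left (a⁻¹ : ℂ)
    simpa [d] using (hasSum_nat_add_iff' 1).2 hfull
  have h3 := eq_of_hasSum_pow_succ one_pos (c := fun n => 2 * γ n) hγ hd 2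
  norm_num [d] at h3
  have ha' : (a : ℂ) ≠ 0 := ofReal_ne_zero.2 ha.ne'
  push_cast
  field_simp at h3 ⊢
  linear_combination h3

end Extremal

theorem stmt_19 (a l : ℝ) (ha : a ∈ Ioo (0:ℝ) 1) (hl : 0 < l)
    (hls : l ≤ (1 - a) / Real.sqrt ((1 - a) ^ 2 + a ^ 2)) :
    (fun z : ℂ => z * (1 - ((a * l / (3 - a) : ℝ) : ℂ) * z ^ 3) ^ (-(1:ℂ) / (a:ℂ)))
      ∈ UClass a l ∧
    (∀ z ∈ ball (0:ℂ) 1, z ≠ 0 →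
      (z / (z * (1 - ((a * l / (3 - a) : ℝ) : ℂ) * z ^ 3) ^ (-(1:ℂ) / (a:ℂ)))) ^ (a:ℂ) =
        1 - (a:ℂ) * (l:ℂ) * z ^ (a:ℂ) * segInt a (fun t => t ^ 3) z) ∧
    ∀ γ : ℕ → ℂ,
      IsLogCoeff
        (fun z : ℂ => z * (1 - ((a * l / (3 - a) : ℝ) : ℂ) * z ^ 3) ^ (-(1:ℂ) / (a:ℂ))) γ →
      γ 3 = ((l / (2 * (3 - a)) : ℝ) : ℂ) := by
  obtain ⟨ha0, ha1⟩ := ha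
  have h3a : 0 < 3 - a := by linarith
  set C := a * l / (3 - a) with hC_def
  have hC : 0 ≤ C := by positivity
  have hCa : C ≤ a / 2 := by
    rw [div_le_div_iff₀ h3a two_pos]
    nlinarith [hls.trans (lambdaStar_le_one a)]
  have hCl : C * (3 - a) / a = l := by
    rw [hC_def, div_mul_cancel₀ _ h3a.ne', mul_div_cancel_left₀ _ ha0.ne']
  refine ⟨extremal_mem_UClass ha0 ha1.le hC hCa hl hCl.le, fun z hz hz0 => ?_,
    fun γ hγ => ?_⟩
  · change (z / extremal a C z) ^ (a : ℂ) = _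
    rw [div_extremal_cpow ha0 hz0
      (abs_arg_one_sub_mul_pow_three_lt ha0 ha1.le hC hCa (mem_ball_zero_iff.1 hz).le), mul_assoc,
      cpow_mul_segInt_pow (k := 3) (by norm_num; linarith) hz0, hC_def]
    push_cast
    field_simp
  · rw [extremal_logCoeff_three ha0 ha1.le hC hCa hγ, hC_def]
    congr 1
    field_simp
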